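/- Structure of the deterministic simulated annealing optimum: fix a cache m, placements b^(ℓ) ∈ {0,1}^J of the other caches, and τ ∈ (0, 1/2). Let π be a permutation of {1,…,J} with a_{π(1)} q_m(π(1)) ≥ … ≥ a_{π(J)} q_m(π(J)). Suppose L ∈ {0, 1, …, J−1} is such that δ := K − (1−τ)·L − τ·(J − L − 1) satisfies τ ≤ δ ≤ 1−τ. Define b̄ ∈ [τ, 1−τ]^J by b̄_{π(i)} = 1−τ for i ≤ L, b̄_{π(L+1)} = δ, and b̄_{π(i)} = τ for i > L+1. Then Σ_{j=1}^J b̄_j = K and b̄ minimizes f^(m)(·, b^(−m)) over the set {b ∈ [τ, 1−τ]^J : Σ_{j=1}^J b_j = K}. -/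

import Mathlib

open Finset

/-- `qm p B m j` = Σ_{s ∋ m} p_s Π_{ℓ ∈ s \ {m}} (1 - b^(ℓ)_j). -/
noncomputable def qm {N J : ℕ} (p : Finset (Fin N) → ℝ) (B : Fin N → Fin J → ℝ)
    (m : Fin N) (j : Fin J) : ℝ :=
  ∑ s ∈ Finset.univ.filter (fun s : Finset (Fin N) => m ∈ s),
    p s * ∏ ℓ ∈ s.erase m, (1 - B ℓ j)

/-- Miss probability f(B) = Σ_j a_j Σ_{s ≠ ∅} p_s Π_{ℓ ∈ s} (1 - b^(ℓ)_j). -/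
noncomputable def missProb {N J : ℕ} (a : Fin J → ℝ) (p : Finset (Fin N) → ℝ)
    (B : Fin N → Fin J → ℝ) : ℝ :=
  ∑ j, a j * ∑ s ∈ Finset.univ.filter (fun s : Finset (Fin N) => s.Nonempty),
    p s * ∏ ℓ ∈ s, (1 - B ℓ j)

/-- Local miss probability f^(m)(B) = Σ_j a_j (1 - b^(m)_j) q_m(j). -/
noncomputable def localMiss {N J : ℕ} (a : Fin J → ℝ) (p : Finset (Fin N) → ℝ)
    (B : Fin N → Fin J → ℝ) (m : Fin N) : ℝ :=
  ∑ j, a j * (1 - B m j) * qm p B m j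

/-- A feasible placement: a 0/1 vector over the J files with exactly K ones. -/
def IsPlacement {J : ℕ} (K : ℕ) (b : Fin J → ℝ) : Prop :=
  (∀ j, b j = 0 ∨ b j = 1) ∧ ∑ j, b j = (K : ℝ)

/-
Once the placements of the other caches are fixed, `q_m` no longer depends on `b^(m)`, so the
local miss probability is `Σ_j c_j - Σ_j c_j b_j` with `c_j = a_j q_m(j)`: minimizing it over the
box `[τ, 1-τ]^J` under `Σ_j b_j = K` is a fractional knapsack problem. With the threshold
`t = c_{π(L+1)}`, every feasible `b` satisfies `(c_j - t)(b̄_j - b_j) ≥ 0` for all `j`, because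
`b̄` is at the upper bound where `c_j ≥ t` and at the lower bound where `c_j ≤ t`. Summing and
using `Σ b̄ = Σ b` gives `Σ c_j b_j ≤ Σ c_j b̄_j`.
-/

theorem qm_update_self {N J : ℕ} (p : Finset (Fin N) → ℝ) (B : Fin N → Fin J → ℝ)
    (m : Fin N) (v : Fin J → ℝ) : qm p (Function.update B m v) m = qm p B m := by
  funext j
  refine sum_congr rfl fun s _ => congrArg (p s * ·) (prod_congr rfl fun ℓ hℓ => ?_)
  rw [Function.update_of_ne (ne_of_mem_erase hℓ)]

theorem localMiss_update_self {N J : ℕ} (a : Fin J → ℝ) (p : Finset (Fin N) → ℝ)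
    (B : Fin N → Fin J → ℝ) (m : Fin N) (v : Fin J → ℝ) :
    localMiss a p (Function.update B m v) m =
      ∑ j, a j * qm p B m j - ∑ j, a j * qm p B m j * v j := by
  rw [localMiss, qm_update_self, ← sum_sub_distrib]
  refine sum_congr rfl fun j _ => ?_
  rw [Function.update_self]
  ring

theorem sum_mul_le_sum_mul_of_sub_mul_sub_nonneg {ι : Type*} (s : Finset ι) (c u v : ι → ℝ)
    (t : ℝ) (h : ∀ j ∈ s, 0 ≤ (c j - t) * (u j - v j)) (hsum : ∑ j ∈ s, u j = ∑ j ∈ s, v j) :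
    ∑ j ∈ s, c j * v j ≤ ∑ j ∈ s, c j * u j := by
  have hexpand : ∑ j ∈ s, (c j - t) * (u j - v j) =
      ∑ j ∈ s, c j * u j - ∑ j ∈ s, c j * v j - t * (∑ j ∈ s, u j - ∑ j ∈ s, v j) := by
    simp only [mul_sub, sub_mul, sum_sub_distrib, ← mul_sum]
    ring
  have := sum_nonneg h
  rw [hexpand, hsum, sub_self, mul_zero, sub_zero] at this
  linarith

def thresholdProfile (L : ℕ) (hi mid lo : ℝ) (k : ℕ) : ℝ :=
  if k < L then hi else if k = L then mid else lo

theorem sum_range_thresholdProfile {L n : ℕ} (hL : L < n) (hi mid lo : ℝ) :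
    ∑ k ∈ range n, thresholdProfile L hi mid lo k = hi * L + mid + lo * ((n : ℝ) - L - 1) := by
  obtain ⟨r, rfl⟩ := Nat.exists_eq_add_of_lt hL
  have hhead : ∀ k ∈ range L, thresholdProfile L hi mid lo k = hi :=
    fun k hk => if_pos (mem_range.mp hk)
  have htail : ∀ k ∈ range r, thresholdProfile L hi mid lo (L + 1 + k) = lo :=
    fun k _ => by rw [thresholdProfile, if_neg (by omega), if_neg (by omega)]
  rw [show L + r + 1 = L + 1 + r by omega, sum_range_add, sum_range_succ,
    sum_congr rfl hhead, sum_congr rfl htail]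
  simp only [sum_const, card_range, nsmul_eq_mul, thresholdProfile, lt_irrefl, if_false,
    if_true]
  push_cast
  ring

theorem sub_mul_thresholdProfile_sub_nonneg {L k : ℕ} {hi mid lo t x v : ℝ}
    (hle : k ≤ L → t ≤ x) (hge : L ≤ k → x ≤ t) (hv : v ∈ Set.Icc lo hi) :
    0 ≤ (x - t) * (thresholdProfile L hi mid lo k - v) := by
  rcases lt_trichotomy k L with hk | rfl | hk
  · rw [thresholdProfile, if_pos hk]
    exact mul_nonneg (by linarith [hle hk.le]) (by linarith [hv.2])
  · simp [le_antisymm (hge le_rfl) (hle le_rfl)]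
  · rw [thresholdProfile, if_neg (by omega), if_neg (by omega)]
    exact mul_nonneg_of_nonpos_of_nonpos (by linarith [hge hk.le]) (by linarith [hv.1])

theorem dsa_threshold_structure_general (N J K : ℕ) (m : Fin N)
    (a : Fin J → ℝ)
    (p : Finset (Fin N) → ℝ)
    (B : Fin N → Fin J → ℝ)
    (τ : ℝ)
    (π : Equiv.Perm (Fin J))
    (hπ : ∀ i i' : Fin J, i ≤ i' →
      a (π i') * qm p B m (π i') ≤ a (π i) * qm p B m (π i))
    (L : ℕ) (hL : L < J)
    (δ : ℝ) (hδ : δ = (K : ℝ) - (1 - τ) * L - τ * ((J : ℝ) - L - 1))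
    (bbar : Fin J → ℝ)
    (hbbar : ∀ j : Fin J, bbar j =
      if ((π.symm j : ℕ)) < L then 1 - τ
      else if ((π.symm j : ℕ)) = L then δ
      else τ) :
    (∑ j, bbar j = (K : ℝ)) ∧
    ∀ b : Fin J → ℝ, (∀ j, b j ∈ Set.Icc τ (1 - τ)) → ∑ j, b j = (K : ℝ) →
      localMiss a p (Function.update B m bbar) m ≤
        localMiss a p (Function.update B m b) m := by
  have hprofile : ∀ j, bbar j = thresholdProfile L (1 - τ) δ τ (π.symm j) := hbbar
  have hsum : ∑ j, bbar j = K := by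
    rw [sum_congr rfl fun j _ => hprofile j,
      Equiv.sum_comp π.symm fun i => thresholdProfile L (1 - τ) δ τ i,
      Fin.sum_univ_eq_sum_range (thresholdProfile L (1 - τ) δ τ), sum_range_thresholdProfile hL,
      hδ]
    ring
  refine ⟨hsum, fun b hb hbsum => ?_⟩
  set c : Fin J → ℝ := fun j => a j * qm p B m j
  have hexchange : ∀ j ∈ univ, 0 ≤ (c j - c (π ⟨L, hL⟩)) * (bbar j - b j) := by
    intro j _
    have hc : c j = c (π (π.symm j)) := by rw [Equiv.apply_symm_apply]
    rw [hprofile, hc]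
    exact sub_mul_thresholdProfile_sub_nonneg (fun hle => hπ _ _ (Fin.le_def.mpr hle))
      (fun hge => hπ _ _ (Fin.le_def.mpr hge)) (hb j)
  rw [localMiss_update_self, localMiss_update_self]
  exact sub_le_sub_left (sum_mul_le_sum_mul_of_sub_mul_sub_nonneg univ c bbar b _ hexchange
    (hsum.trans hbsum.symm)) _

/-- structure of the deterministic simulated annealing optimum: the
(1−τ, …, 1−τ, δ, τ, …, τ) placement along the ordering by a_j q_m(j) sums to K and minimizes
the local miss probability over {b ∈ [τ, 1−τ]^J : Σ_j b_j = K}. -/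
theorem dsa_threshold_structure (N J K : ℕ) (hK1 : 1 ≤ K) (hKJ : K ≤ J) (m : Fin N)
    (a : Fin J → ℝ) (ha : ∀ j, 0 ≤ a j) (hasum : ∑ j, a j = 1)
    (p : Finset (Fin N) → ℝ) (hp : ∀ s, 0 ≤ p s)
    (hpsum : ∑ s ∈ Finset.univ.filter (fun s : Finset (Fin N) => s.Nonempty), p s = 1)
    (B : Fin N → Fin J → ℝ)
    (hB : ∀ ℓ, ℓ ≠ m → ∀ j, B ℓ j = 0 ∨ B ℓ j = 1)
    (τ : ℝ) (hτ : τ ∈ Set.Ioo (0 : ℝ) (1 / 2))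
    (π : Equiv.Perm (Fin J))
    (hπ : ∀ i i' : Fin J, i ≤ i' →
      a (π i') * qm p B m (π i') ≤ a (π i) * qm p B m (π i))
    (L : ℕ) (hL : L < J)
    (δ : ℝ) (hδ : δ = (K : ℝ) - (1 - τ) * L - τ * ((J : ℝ) - L - 1))
    (hδlo : τ ≤ δ) (hδhi : δ ≤ 1 - τ)
    (bbar : Fin J → ℝ)
    (hbbar : ∀ j : Fin J, bbar j =
      if ((π.symm j : ℕ)) < L then 1 - τ
      else if ((π.symm j : ℕ)) = L then δ
      else τ) :
    (∑ j, bbar j = (K : ℝ)) ∧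
    ∀ b : Fin J → ℝ, (∀ j, b j ∈ Set.Icc τ (1 - τ)) → ∑ j, b j = (K : ℝ) →
      localMiss a p (Function.update B m bbar) m ≤
        localMiss a p (Function.update B m b) m :=
  dsa_threshold_structure_general N J K m a p B τ π hπ L hL δ hδ bbar hbbar
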